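/- arXiv:2111.04178 — 3 statements merged into one kernel-verified Lean document; each statement's English description precedes it below -/
import Mathlib

section
/- Consider the function f(x1,x2,y1,y2) = (ω+1)(x1+x2) + (1−ω)(y1+y2) − (x1+x2)(y1+y2) − 2ω·x1·x2 + 2ω·y1·y2 on [0,1]^4 with parameter ω ∈ (0,1), where (x1,x2) are minimizing variables and (y1,y2) are maximizing variables. Then the unique Nash equilibrium (a point where no single variable can be unilaterally changed to decrease f for the x-variables or increase f for the y-variables) is x1 = x2 = y1 = y2 = 1/2. -/
set_option maxHeartbeats 1000000 in
/-- The generalized matching pennies objective on `[0,1]^4` with parameter `ω ∈ (0,1)`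
has the uniform point `(1/2,1/2,1/2,1/2)` as its unique Nash equilibrium. -/
theorem stmt_0 (ω : ℝ) (hω0 : 0 < ω) (hω1 : ω < 1)
    (f : ℝ → ℝ → ℝ → ℝ → ℝ)
    (hf : ∀ x1 x2 y1 y2, f x1 x2 y1 y2 =
      (ω + 1) * (x1 + x2) + (1 - ω) * (y1 + y2) - (x1 + x2) * (y1 + y2)
        - 2 * ω * x1 * x2 + 2 * ω * y1 * y2)
    (x1 x2 y1 y2 : ℝ)
    (hx1 : x1 ∈ Set.Icc (0:ℝ) 1) (hx2 : x2 ∈ Set.Icc (0:ℝ) 1)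
    (hy1 : y1 ∈ Set.Icc (0:ℝ) 1) (hy2 : y2 ∈ Set.Icc (0:ℝ) 1) :
    ((∀ a ∈ Set.Icc (0:ℝ) 1, f x1 x2 y1 y2 ≤ f a x2 y1 y2) ∧
     (∀ b ∈ Set.Icc (0:ℝ) 1, f x1 x2 y1 y2 ≤ f x1 b y1 y2) ∧
     (∀ c ∈ Set.Icc (0:ℝ) 1, f x1 x2 c y2 ≤ f x1 x2 y1 y2) ∧
     (∀ d ∈ Set.Icc (0:ℝ) 1, f x1 x2 y1 d ≤ f x1 x2 y1 y2)) ↔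
    (x1 = 1/2 ∧ x2 = 1/2 ∧ y1 = 1/2 ∧ y2 = 1/2) := by
  obtain ⟨hx1a, hx1b⟩ := hx1
  obtain ⟨hx2a, hx2b⟩ := hx2
  obtain ⟨hy1a, hy1b⟩ := hy1
  obtain ⟨hy2a, hy2b⟩ := hy2
  constructor
  · rintro ⟨h1, h2, h3, h4⟩
    have hA1 : x1 * (ω + 1 - (y1 + y2) - 2*ω*x2) ≤ 0 := by
      have := h1 0 (by norm_num); rw [hf, hf] at this; nlinarith [this]
    have hA2 : 0 ≤ (1 - x1) * (ω + 1 - (y1 + y2) - 2*ω*x2) := by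
      have := h1 1 (by norm_num); rw [hf, hf] at this; nlinarith [this]
    have hB1 : x2 * (ω + 1 - (y1 + y2) - 2*ω*x1) ≤ 0 := by
      have := h2 0 (by norm_num); rw [hf, hf] at this; nlinarith [this]
    have hB2 : 0 ≤ (1 - x2) * (ω + 1 - (y1 + y2) - 2*ω*x1) := by
      have := h2 1 (by norm_num); rw [hf, hf] at this; nlinarith [this]
    have hC1 : 0 ≤ y1 * (1 - ω - (x1 + x2) + 2*ω*y2) := by
      have := h3 0 (by norm_num); rw [hf, hf] at this; nlinarith [this]
    have hC2 : (1 - y1) * (1 - ω - (x1 + x2) + 2*ω*y2) ≤ 0 := by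
      have := h3 1 (by norm_num); rw [hf, hf] at this; nlinarith [this]
    have hD1 : 0 ≤ y2 * (1 - ω - (x1 + x2) + 2*ω*y1) := by
      have := h4 0 (by norm_num); rw [hf, hf] at this; nlinarith [this]
    have hD2 : (1 - y2) * (1 - ω - (x1 + x2) + 2*ω*y1) ≤ 0 := by
      have := h4 1 (by norm_num); rw [hf, hf] at this; nlinarith [this]
    clear h1 h2 h3 h4 hf
    -- x1 = x2
    have hxeq : x1 = x2 := by
      rcases lt_trichotomy x1 x2 with h | h | h
      · have hx2pos : 0 < x2 := lt_of_le_of_lt hx1a h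
        have hx1lt : x1 < 1 := lt_of_lt_of_le h hx2b
        have hBle : ω + 1 - (y1 + y2) - 2*ω*x1 ≤ 0 := by
          by_contra h'; push_neg at h'; nlinarith [mul_pos hx2pos h', hB1]
        have hAge : 0 ≤ ω + 1 - (y1 + y2) - 2*ω*x2 := by
          by_contra h'; push_neg at h'
          nlinarith [mul_pos (by linarith : (0:ℝ) < 1 - x1) (by linarith : (0:ℝ) < -(ω + 1 - (y1 + y2) - 2*ω*x2)), hA2]
        nlinarith [mul_pos hω0 (sub_pos.2 h)]
      · exact h
      · have hx1pos : 0 < x1 := lt_of_le_of_lt hx2a h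
        have hx2lt : x2 < 1 := lt_of_lt_of_le h hx1b
        have hAle : ω + 1 - (y1 + y2) - 2*ω*x2 ≤ 0 := by
          by_contra h'; push_neg at h'; nlinarith [mul_pos hx1pos h', hA1]
        have hBge : 0 ≤ ω + 1 - (y1 + y2) - 2*ω*x1 := by
          by_contra h'; push_neg at h'
          nlinarith [mul_pos (by linarith : (0:ℝ) < 1 - x2) (by linarith : (0:ℝ) < -(ω + 1 - (y1 + y2) - 2*ω*x1)), hB2]
        nlinarith [mul_pos hω0 (sub_pos.2 h)]
    have hyeq : y1 = y2 := by
      rcases lt_trichotomy y1 y2 with h | h | h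
      · have hy2pos : 0 < y2 := lt_of_le_of_lt hy1a h
        have hy1lt : y1 < 1 := lt_of_lt_of_le h hy2b
        have hDge : 0 ≤ 1 - ω - (x1 + x2) + 2*ω*y1 := by
          by_contra h'; push_neg at h'
          nlinarith [mul_pos hy2pos (by linarith : (0:ℝ) < -(1 - ω - (x1 + x2) + 2*ω*y1)), hD1]
        have hCle : 1 - ω - (x1 + x2) + 2*ω*y2 ≤ 0 := by
          by_contra h'; push_neg at h'
          nlinarith [mul_pos (by linarith : (0:ℝ) < 1 - y1) h', hC2]
        nlinarith [mul_pos hω0 (sub_pos.2 h)]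
      · exact h
      · have hy1pos : 0 < y1 := lt_of_le_of_lt hy2a h
        have hy2lt : y2 < 1 := lt_of_lt_of_le h hy1b
        have hCge : 0 ≤ 1 - ω - (x1 + x2) + 2*ω*y2 := by
          by_contra h'; push_neg at h'
          nlinarith [mul_pos hy1pos (by linarith : (0:ℝ) < -(1 - ω - (x1 + x2) + 2*ω*y2)), hC1]
        have hDle : 1 - ω - (x1 + x2) + 2*ω*y1 ≤ 0 := by
          by_contra h'; push_neg at h'
          nlinarith [mul_pos (by linarith : (0:ℝ) < 1 - y2) h', hD2]
        nlinarith [mul_pos hω0 (sub_pos.2 h)]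
    subst hxeq
    subst hyeq
    -- now slope A = ω+1-2y1-2ωx1, C = 1-ω-2x1+2ωy1
    have hx0 : x1 ≠ 0 := by
      intro h0
      subst h0
      have hAge : 0 ≤ ω + 1 - (y1 + y1) - 2*ω*0 := by nlinarith [hA2]
      have hCpos : 0 < 1 - ω - (0 + 0) + 2*ω*y1 := by
        nlinarith [mul_nonneg hω0.le hy1a]
      have hy1e : y1 = 1 := by nlinarith [hC2, hCpos]
      rw [hy1e] at hAge; linarith
    have hx1' : x1 ≠ 1 := by
      intro h0
      subst h0
      have hAle : ω + 1 - (y1 + y1) - 2*ω*1 ≤ 0 := by nlinarith [hA1]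
      have hCneg : 1 - ω - (1 + 1) + 2*ω*y1 < 0 := by
        nlinarith [mul_le_mul_of_nonneg_left hy1b hω0.le]
      have hy1e : y1 = 0 := by nlinarith [hC1, hCneg]
      rw [hy1e] at hAle; linarith
    have hxlt : 0 < x1 := lt_of_le_of_ne hx1a (Ne.symm hx0)
    have hxlt' : x1 < 1 := lt_of_le_of_ne hx1b hx1'
    have hAz : ω + 1 - (y1 + y1) - 2*ω*x1 = 0 := by
      have h1' : ω + 1 - (y1 + y1) - 2*ω*x1 ≤ 0 := by
        by_contra h'; push_neg at h'; nlinarith [mul_pos hxlt h', hA1]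
      have h2' : 0 ≤ ω + 1 - (y1 + y1) - 2*ω*x1 := by
        by_contra h'; push_neg at h'
        nlinarith [mul_pos (by linarith : (0:ℝ) < 1 - x1) (by linarith : (0:ℝ) < -(ω + 1 - (y1 + y1) - 2*ω*x1)), hA2]
      linarith
    have hy0 : 0 < y1 := by nlinarith [mul_lt_mul_of_pos_left hxlt' hω0]
    have hy1' : y1 < 1 := by nlinarith [mul_pos hω0 hxlt]
    have hCz : 1 - ω - (x1 + x1) + 2*ω*y1 = 0 := by
      have h1' : 1 - ω - (x1 + x1) + 2*ω*y1 ≤ 0 := by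
        by_contra h'; push_neg at h'
        nlinarith [mul_pos (by linarith : (0:ℝ) < 1 - y1) h', hC2]
      have h2' : 0 ≤ 1 - ω - (x1 + x1) + 2*ω*y1 := by
        by_contra h'; push_neg at h'
        nlinarith [mul_pos hy0 (by linarith : (0:ℝ) < -(1 - ω - (x1 + x1) + 2*ω*y1)), hC1]
      linarith
    have hx12 : x1 = 1/2 := by
      have key : (2 + 2*ω^2) * (x1 - 1/2) = 0 := by linear_combination (-ω) * hAz - hCz
      have hpos : (0:ℝ) < 2 + 2*ω^2 := by positivity
      rcases mul_eq_zero.mp key with h | h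
      · exact absurd h (ne_of_gt hpos)
      · linarith
    have hy12 : y1 = 1/2 := by
      rw [hx12] at hAz; linear_combination (-(1:ℝ)/2) * hAz
    exact ⟨hx12, hx12, hy12, hy12⟩
  · rintro ⟨e1, e2, e3, e4⟩
    subst e1; subst e2; subst e3; subst e4
    refine ⟨?_, ?_, ?_, ?_⟩ <;> intro a _ <;> rw [hf, hf] <;> ring_nf <;> try linarith
end

section
/- Let J_OGDA(λ) be the polynomial π(λ) = (4(1+ω²)η²(1−2λ)² + (λ−1)²λ² − 4ωηλ(1−3λ+2λ²)) · ((λ−1)λ + 2ωη(2λ−1))². Then λ* = (1/2)(1 + 4ηi + 4ωη + √(1 − 16η² + 32iωη² + 16ω²η²)) is a root of π, and for all 0 < η ≤ ω with ω ∈ (0,1), |λ*| > 1. -/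
set_option maxHeartbeats 4000000 in
private lemma keyC_aux (u t : ℝ) (hu0 : 0 ≤ u) (hu1 : u ≤ 1) (ht0 : 0 ≤ t) (ht : t ≤ 3/4) :
    32*(1+4*u)*(1+t/2+t^2)*(1-u)^3 ≤ (56+32*u)*(1-u) + 16*t := by
  have h1u : (0:ℝ) ≤ 1 - u := by linarith
  have hG : (0:ℝ) ≤ (1+4*u)*(1-u)^3 := by positivity
  have hA : (0:ℝ) ≤ (56+32*u)*(1-u) - 32*(1+4*u)*(1-u)^3 := by
    nlinarith [mul_nonneg h1u (sq_nonneg (u-1/6)), mul_nonneg (mul_nonneg h1u h1u) (sq_nonneg u)]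
  have hAH : (0:ℝ) ≤ 6 - 86*u + 526*u^2 - 682*u^3 + 248*u^4 := by
    nlinarith [sq_nonneg (u-1/10), mul_nonneg h1u (sq_nonneg (u-1/10)),
      mul_nonneg (mul_nonneg hu0 h1u) (sq_nonneg (u-1/2)),
      mul_nonneg hu0 (sq_nonneg (u-1/2)), sq_nonneg (u^2-u/10), mul_nonneg hu0 h1u]
  nlinarith [mul_nonneg (by linarith : (0:ℝ) ≤ 1-(4/3)*t) hA,
    mul_nonneg ht0 hAH,
    mul_nonneg (mul_nonneg ht0 hG) (by linarith : (0:ℝ) ≤ 3/4 - t)]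

set_option maxHeartbeats 4000000 in
private lemma smallT_aux (ω η x y t : ℝ) (hω0 : 0 < ω) (hω1 : ω < 1) (hη0 : 0 < η) (hηω : η ≤ ω)
    (hx : 0 < x) (hy : 0 < y) (hx1 : x < 1)
    (h1 : x^2 - y^2 = 1 - 16*η^2 + 16*ω^2*η^2) (h2 : x*y = 16*ω*η^2)
    (htdef : t = 16*η^2*(1-ω^2)) (ht : t ≤ 3/4) :
    2 < x^2 + (1+4*ω*η)*x + 4*η*y + 16*η^2 + 4*ω*η := by
  have h1ω : 0 < 1 - ω^2 := by nlinarith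
  have ht0 : 0 ≤ t := by rw [htdef]; positivity
  have hy16 : 16*ω*η^2 < y := by nlinarith
  have hx2w : 1 - t ≤ x^2 := by rw [htdef]; nlinarith [sq_nonneg y]
  have hx2 : 1 - t + 256*ω^2*η^4 ≤ x^2 := by
    rw [htdef]; nlinarith [mul_pos (mul_pos hω0 hη0) hη0]
  have h8 : 0 ≤ 44 - 36*t - 9*t^2 - 4*t^3 - 4*t^4 := by
    nlinarith [mul_le_mul_of_nonneg_right ht ht0,
      mul_le_mul_of_nonneg_right (mul_le_mul_of_nonneg_right ht ht0) ht0,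
      mul_le_mul_of_nonneg_right (mul_le_mul_of_nonneg_right (mul_le_mul_of_nonneg_right ht ht0) ht0) ht0]
  have hq2 : (1 - t/2 - t^2/8 - t^3/16 - t^4/8)^2 ≤ 1 - t := by
    nlinarith [mul_nonneg (mul_nonneg (mul_nonneg (mul_nonneg ht0 ht0) ht0) ht0) h8]
  have hxq : 1 - t/2 - t^2/8 - t^3/16 - t^4/8 ≤ x := by
    by_contra hc
    push_neg at hc
    nlinarith [mul_self_lt_mul_self hx.le hc]
  have hωη : (0:ℝ) ≤ 1 + 4*ω*η := by nlinarith
  have hxq2 : (1+4*ω*η) * (1 - t/2 - t^2/8 - t^3/16 - t^4/8) ≤ (1+4*ω*η) * x :=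
    mul_le_mul_of_nonneg_left hxq hωη
  have htt0 : (0:ℝ) ≤ 1 + t/2 + t^2 := by positivity
  have ha2 : t^2/8 ≤ 32*ω*η^3*(1-ω^2)^2 := by
    rw [htdef]
    nlinarith [mul_nonneg (mul_nonneg (sub_nonneg.2 hηω) (by positivity : (0:ℝ) ≤ η^3)) (sq_nonneg (1-ω^2))]
  have hfac : (1+4*ω*η)*(1+t/2+t^2) ≤ (1+4*ω^2)*(1+t/2+t^2) := by
    apply mul_le_mul_of_nonneg_right _ htt0
    nlinarith [mul_nonneg hω0.le (sub_nonneg.2 hηω)]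
  have hcost1 : (1+4*ω*η)*((1+t/2+t^2)*(t^2/8)) ≤ ((1+4*ω^2)*(1+t/2+t^2))*(32*ω*η^3*(1-ω^2)^2) := by
    have h5 : (0:ℝ) ≤ t^2/8 := by positivity
    calc (1+4*ω*η)*((1+t/2+t^2)*(t^2/8)) = ((1+4*ω*η)*(1+t/2+t^2))*(t^2/8) := by ring
      _ ≤ ((1+4*ω^2)*(1+t/2+t^2))*(t^2/8) := mul_le_mul_of_nonneg_right hfac h5
      _ ≤ ((1+4*ω^2)*(1+t/2+t^2))*(32*ω*η^3*(1-ω^2)^2) := by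
          apply mul_le_mul_of_nonneg_left ha2
          positivity
  have hkeyC : 32*(1+4*ω^2)*(1+t/2+t^2)*(1-ω^2)^3 ≤ (56+32*ω^2)*(1-ω^2) + 16*t :=
    keyC_aux (ω^2) t (sq_nonneg ω) (by nlinarith) ht0 ht
  have hchain : ((1+4*ω*η)*((1+t/2+t^2)*(t^2/8))) * (1-ω^2)
      ≤ (56*ω*η^3 + 32*ω^3*η^3 + 256*ω*η^5) * (1-ω^2) := by
    have hs1 := mul_le_mul_of_nonneg_right hcost1 h1ω.le
    have hs2 := mul_le_mul_of_nonneg_right hkeyC (by positivity : (0:ℝ) ≤ ω*η^3)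
    have h16t : 16*t*(ω*η^3) = 256*ω*η^5*(1-ω^2) := by rw [htdef]; ring
    nlinarith [hs1, hs2, h16t]
  have hcostfull : (1+4*ω*η)*((1+t/2+t^2)*(t^2/8)) ≤ 56*ω*η^3 + 32*ω^3*η^3 + 256*ω*η^5 :=
    le_of_mul_le_mul_right hchain h1ω
  have hid : (1-t) + 256*ω^2*η^4 + (1+4*ω*η)*(1 - t/2 - t^2/8 - t^3/16 - t^4/8)
        + 4*η*(16*ω*η^2) + 16*η^2 + 4*ω*η - 2
      = 8*η*(ω-η) + 24*ω*η^2*(ω-η)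
        + (56*ω*η^3 + 32*ω^3*η^3 + 256*ω^2*η^4 - (1+4*ω*η)*((1+t/2+t^2)*(t^2/8))) := by
    rw [htdef]; ring
  have hB : 2 ≤ (1-t) + 256*ω^2*η^4 + (1+4*ω*η)*(1 - t/2 - t^2/8 - t^3/16 - t^4/8)
      + 4*η*(16*ω*η^2) + 16*η^2 + 4*ω*η := by
    linarith [hid, hcostfull,
      mul_nonneg (sub_nonneg.2 hηω) hη0.le,
      mul_nonneg (mul_nonneg (sub_nonneg.2 hηω) hη0.le) (mul_nonneg hω0.le hη0.le),
      mul_nonneg (mul_nonneg (sub_nonneg.2 hηω) hω0.le) (by positivity : (0:ℝ) ≤ η^4)]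
  have hm2 : 64*ω*η^3 < 4*η*y := by nlinarith [mul_pos hη0 (sub_pos.2 hy16)]
  linarith [hx2, hxq2, hB, hm2]

set_option maxHeartbeats 4000000 in
private lemma bigT_aux (ω η x y : ℝ) (hω0 : 0 < ω) (hω1 : ω < 1) (hη0 : 0 < η) (hηω : η ≤ ω)
    (hx : 0 < x) (hy : 0 < y) (hx1 : x < 1)
    (h1 : x^2 - y^2 = 1 - 16*η^2 + 16*ω^2*η^2) (h2 : x*y = 16*ω*η^2)
    (ht : 3/4 ≤ 16*η^2*(1-ω^2)) :
    2 < x^2 + (1+4*ω*η)*x + 4*η*y + 16*η^2 + 4*ω*η := by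
  have hxy2 : (x*y)^2 = (16*ω*η^2)^2 := by rw [h2]
  have hx4 : x^4 = (1 - 16*η^2 + 16*ω^2*η^2)*x^2 + 256*ω^2*η^4 := by
    linear_combination (x^2)*h1 + hxy2
  have hb1 : 3/64 ≤ η^2 := by nlinarith [sq_nonneg (ω*η)]
  have hb2 : 3/61 ≤ η^2 := by
    nlinarith [mul_nonneg (mul_nonneg (sub_nonneg.2 hηω) (by positivity : (0:ℝ) ≤ ω+η)) (sq_nonneg η),
      mul_le_mul_of_nonneg_left hb1 (sq_nonneg η)]
  have hxhalf : 1/2 < x := by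
    by_contra hc
    push_neg at hc
    have hx2q : x^2 ≤ 1/4 := by nlinarith
    have hyq : 0 ≤ x^2 - 1 + (16*η^2 - 16*ω^2*η^2) := by nlinarith [sq_nonneg y]
    have hcert : 16*η^2 - 16*ω^2*η^2 - 3/4 + 1/18 ≤ 1024*ω^2*η^4 := by
      nlinarith [mul_nonneg (sq_nonneg (η^2-1/16)) (sq_nonneg η), sq_nonneg (η^2-5/72),
        mul_nonneg (mul_nonneg (sub_nonneg.2 hηω) (by positivity : (0:ℝ) ≤ ω+η)) (by positivity : (0:ℝ) ≤ η^4),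
        mul_nonneg (mul_nonneg (sub_nonneg.2 hηω) (by positivity : (0:ℝ) ≤ ω+η)) (by positivity : (0:ℝ) ≤ η^2)]
    nlinarith [hx4, hx2q, hyq, hcert, mul_le_mul_of_nonneg_right hx2q hyq]
  have hy16 : 16*ω*η^2 < y := by nlinarith
  have hm3 : 256*ω^2*η^4 ≤ y^2 := by nlinarith [mul_pos (mul_pos hω0 hη0) hη0]
  have hxlow : 1 - (2/3)*(16*η^2 - 16*ω^2*η^2 - y^2) ≤ x := by
    have h3 : (1-x)*(3/2) ≤ (1-x)*(1+x) := by
      apply mul_le_mul_of_nonneg_left (by linarith) (by linarith)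
    nlinarith [h3, h1]
  have hωη : (0:ℝ) ≤ 1 + 4*ω*η := by nlinarith
  have hm1 : (1+4*ω*η)*(1 - (2/3)*(16*η^2 - 16*ω^2*η^2 - y^2)) ≤ (1+4*ω*η)*x :=
    mul_le_mul_of_nonneg_left hxlow hωη
  have hm2 : 64*ω*η^3 < 4*η*y := by nlinarith [mul_pos hη0 (sub_pos.2 hy16)]
  have hF : 0 < 24*ω*η - 32*η^2 + 80*ω^2*η^2 + 64*ω*η^3 + 1280*ω^2*η^4 := by
    nlinarith [hb2, mul_nonneg (sub_nonneg.2 hηω) hη0.le, ht,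
      mul_le_mul_of_nonneg_left hb2 (by positivity : (0:ℝ) ≤ η^2),
      mul_le_mul_of_nonneg_left hb2 (by positivity : (0:ℝ) ≤ η^4),
      mul_nonneg (mul_nonneg (sub_nonneg.2 hηω) hη0.le) (sq_nonneg η),
      mul_nonneg (mul_nonneg (mul_nonneg (sub_nonneg.2 hηω) hη0.le) (sq_nonneg η)) (sq_nonneg η),
      mul_pos (mul_pos hω0 hω0) (mul_pos (mul_pos hη0 hη0) (mul_pos hη0 hη0))]
  nlinarith [h1, hm1, hm2, hm3, hF,
    mul_nonneg (mul_nonneg hω0.le hη0.le) (sq_nonneg y),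
    mul_nonneg (mul_nonneg (mul_nonneg hω0.le hω0.le) hω0.le) (mul_nonneg (sq_nonneg η) hη0.le)]

set_option maxHeartbeats 4000000 in
/-- The point `λ* = (1 + 4ηi + 4ωη + √(1 - 16η² + 32iωη² + 16ω²η²))/2` is a root of the
OGDA characteristic polynomial `π`, and for `0 < η ≤ ω` with `ω ∈ (0,1)`, `|λ*| > 1`. -/
theorem stmt_9 (ω η : ℝ) (hω0 : 0 < ω) (hω1 : ω < 1) (hη0 : 0 < η) (hηω : η ≤ ω)
    (P : ℂ → ℂ)
    (hP : ∀ z : ℂ, P z =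
      (4 * (1 + (ω:ℂ)^2) * (η:ℂ)^2 * (1 - 2*z)^2 + (z - 1)^2 * z^2
          - 4 * (ω:ℂ) * (η:ℂ) * z * (1 - 3*z + 2*z^2)) *
        ((z - 1) * z + 2 * (ω:ℂ) * (η:ℂ) * (2*z - 1))^2)
    (lamStar : ℂ)
    (hlam : lamStar = (1 + 4 * (η:ℂ) * Complex.I + 4 * (ω:ℂ) * (η:ℂ) +
      ((1 : ℂ) - 16 * (η:ℂ)^2 + 32 * Complex.I * (ω:ℂ) * (η:ℂ)^2
        + 16 * (ω:ℂ)^2 * (η:ℂ)^2) ^ ((1 : ℂ)/2)) / 2) :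
    P lamStar = 0 ∧ 1 < ‖lamStar‖ := by
  set D : ℂ := (1 : ℂ) - 16 * (η:ℂ)^2 + 32 * Complex.I * (ω:ℂ) * (η:ℂ)^2
        + 16 * (ω:ℂ)^2 * (η:ℂ)^2 with hD
  set s : ℂ := D ^ ((1:ℂ)/2) with hs
  have hs2 : s^2 = D := by
    rw [hs, show ((1:ℂ)/2) = (((2:ℕ) : ℂ))⁻¹ by norm_num]
    exact_mod_cast Complex.cpow_nat_inv_pow _ two_ne_zero
  constructor
  · -- root
    have key : lamStar^2 - (1 + 4*(ω:ℂ)*(η:ℂ) + 4*Complex.I*(η:ℂ))*lamStar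
        + (2*(ω:ℂ)*(η:ℂ) + 2*Complex.I*(η:ℂ)) = 0 := by
      rw [hlam]
      rw [hD] at hs2
      linear_combination hs2/4 - Complex.I_sq * ((η:ℂ)^2*4)
    rw [hP]
    linear_combination ((lamStar^2 - lamStar - (2*(ω:ℂ)*(η:ℂ) - 2*Complex.I*(η:ℂ))*(2*lamStar - 1)) *
        ((lamStar - 1) * lamStar + 2*(ω:ℂ)*(η:ℂ)*(2*lamStar - 1))^2) * key
      + Complex.I_sq * ((η:ℂ)^2 * 4 * ((lamStar - 1) * lamStar + 2*(ω:ℂ)*(η:ℂ)*(2*lamStar - 1))^2 * (2*lamStar-1)^2)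
  · -- modulus
    have hDre : D.re = 1 - 16*η^2 + 16*ω^2*η^2 := by
      rw [hD]; simp [pow_two, Complex.mul_re, Complex.mul_im]
    have hDim : D.im = 32*ω*η^2 := by
      rw [hD]; simp [pow_two, Complex.mul_re, Complex.mul_im]
    have hD0 : D ≠ 0 := by
      intro h
      have h2 : (0:ℝ) = 32*ω*η^2 := by rw [← hDim, h]; simp
      nlinarith [mul_pos hω0 (mul_pos hη0 hη0)]
    have hsre : 0 ≤ s.re := by
      rw [hs, Complex.cpow_def_of_ne_zero hD0, Complex.exp_re]
      have him : (Complex.log D * (1/2)).im = D.arg / 2 := by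
        simp [Complex.log_im]
        ring
      rw [him]
      have h1 := Complex.arg_le_pi D
      have h2 := Complex.neg_pi_lt_arg D
      have hcos : 0 ≤ Real.cos (D.arg / 2) := by
        apply Real.cos_nonneg_of_mem_Icc
        constructor <;> [linarith; linarith]
      positivity
    have hre : s.re^2 - s.im^2 = 1 - 16*η^2 + 16*ω^2*η^2 := by
      have h := congrArg Complex.re hs2
      rw [hDre] at h
      rw [← h]
      simp [pow_two, Complex.mul_re]
    have him : s.re * s.im = 16*ω*η^2 := by
      have h := congrArg Complex.im hs2
      rw [hDim] at h
      simp [pow_two, Complex.mul_im] at h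
      nlinarith [h]
    have hxpos : 0 < s.re := by
      rcases hsre.lt_or_eq with h | h
      · exact h
      · exfalso
        rw [← h] at him
        nlinarith [him, mul_pos hω0 (mul_pos hη0 hη0)]
    have hypos : 0 < s.im := by
      by_contra hc
      push_neg at hc
      nlinarith [mul_nonneg hxpos.le (neg_nonneg.2 hc), mul_pos hω0 (mul_pos hη0 hη0)]
    -- re and im of lamStar
    have hlre : lamStar.re = (1 + 4*ω*η + s.re)/2 := by
      rw [hlam]; simp [Complex.div_re, Complex.mul_re, Complex.mul_im]
    have hlim : lamStar.im = (4*η + s.im)/2 := by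
      rw [hlam]; simp [Complex.div_im, Complex.mul_re, Complex.mul_im]
    -- core inequality
    have hcore : 2 < s.re^2 + (1+4*ω*η)*s.re + 4*η*s.im + 16*η^2 + 4*ω*η := by
      rcases le_or_gt 1 s.re with hx1 | hx1
      · nlinarith [mul_pos hω0 hη0, mul_pos hη0 hypos, sq_nonneg s.re]
      · rcases le_or_gt (16*η^2*(1-ω^2)) (3/4) with hts | hts
        · exact smallT_aux ω η s.re s.im (16*η^2*(1-ω^2)) hω0 hω1 hη0 hηω hxpos hypos hx1 hre him rfl hts
        · exact bigT_aux ω η s.re s.im hω0 hω1 hη0 hηω hxpos hypos hx1 hre him hts.le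
    have habs : ‖lamStar‖^2 = lamStar.re^2 + lamStar.im^2 := by
      rw [Complex.sq_norm, Complex.normSq_apply]; ring
    have habs1 : 1 < ‖lamStar‖^2 := by
      rw [habs, hlre, hlim]
      nlinarith [hre, hcore]
    nlinarith [habs1, norm_nonneg lamStar]
end

section
/- Let J_EG = I + η·H + η²·H², where H is the 4×4 matrix with rows (0,2ω,1,1), (2ω,0,1,1), (−1,−1,0,2ω), (−1,−1,2ω,0). Then J_EG has eigenvalue 1 + η(−4η + 2ω + 4ηω² + 2√(−1 − 8ηω − 16η²ω²)), and if 0 < η ≤ ω/2 with ω ∈ (0,1) then −4η + 2ω + 4ηω² > 0, so this eigenvalue has absolute value strictly greater than 1. -/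
/-- `J_EG = I + ηH + η²H²` has eigenvalue
`1 + η(-4η + 2ω + 4ηω² + 2√(-1 - 8ηω - 16η²ω²))`, and if `0 < η ≤ ω/2` with `ω ∈ (0,1)`
then `-4η + 2ω + 4ηω² > 0`, so this eigenvalue has modulus strictly greater than `1`. -/
theorem stmt_10 (ω η : ℝ) (hω0 : 0 < ω) (hω1 : ω < 1) (hη0 : 0 < η)
    (H : Matrix (Fin 4) (Fin 4) ℂ)
    (hH : H = !![0, 2*(ω:ℂ), 1, 1;
                 2*(ω:ℂ), 0, 1, 1;
                 -1, -1, 0, 2*(ω:ℂ);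
                 -1, -1, 2*(ω:ℂ), 0])
    (J : Matrix (Fin 4) (Fin 4) ℂ)
    (hJ : J = 1 + (η:ℂ) • H + ((η:ℂ)^2) • (H * H))
    (c : ℂ)
    (hc : c = 1 + (η:ℂ) * (-4*(η:ℂ) + 2*(ω:ℂ) + 4*(η:ℂ)*(ω:ℂ)^2 +
      2 * (((-1 : ℂ) - 8*(η:ℂ)*(ω:ℂ) - 16*(η:ℂ)^2*(ω:ℂ)^2) ^ ((1:ℂ)/2)))) :
    c ∈ spectrum ℂ J ∧
    (η ≤ ω / 2 → -4*η + 2*ω + 4*η*ω^2 > 0 ∧ 1 < ‖c‖) := by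
  set w : ℂ := ((-1 : ℂ) - 8*(η:ℂ)*(ω:ℂ) - 16*(η:ℂ)^2*(ω:ℂ)^2) ^ ((1:ℂ)/2) with hwdef
  have hw2 : w ^ 2 = ((-1 - 8*η*ω - 16*η^2*ω^2 : ℝ) : ℂ) := by
    rw [hwdef]
    have h12 : ((1:ℂ)/2) = ((2:ℕ) : ℂ)⁻¹ := by norm_num
    rw [h12, Complex.cpow_nat_inv_pow _ (by norm_num)]
    push_cast; ring
  have ht0 : (0:ℝ) < 1 + 4*η*ω := by nlinarith
  have htne : ((1:ℂ) + 4*(η:ℂ)*(ω:ℂ)) ≠ 0 := by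
    intro h
    have := congrArg Complex.re h
    simp at this
    nlinarith
  obtain ⟨u, hwu, hu⟩ : ∃ u : ℂ, w = u * ((1:ℂ) + 4*(η:ℂ)*(ω:ℂ)) ∧ u ^ 2 = -1 := by
    refine ⟨w / ((1:ℂ) + 4*(η:ℂ)*(ω:ℂ)), by field_simp, ?_⟩
    rw [div_pow, hw2, div_eq_iff (pow_ne_zero 2 htne)]
    push_cast; ring
  set v : Fin 4 → ℂ := ![1, 1, u, u] with hvdef
  have hvne : v ≠ 0 := by
    intro h
    have := congrFun h 0
    simp [hvdef] at this
  have hμ : H.mulVec v = ((2:ℂ)*(ω:ℂ) + 2*u) • v := by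
    subst hH
    funext i
    fin_cases i <;>
      simp [Matrix.mulVec, dotProduct, Fin.sum_univ_four, hvdef] <;>
      first
      | linear_combination (2 : ℂ) * hu
      | linear_combination (-2 : ℂ) * hu
      | ring
  have hJv : J.mulVec v = c • v := by
    have hcμ : c = 1 + (η:ℂ) * ((2:ℂ)*(ω:ℂ) + 2*u) + (η:ℂ)^2 * ((2:ℂ)*(ω:ℂ) + 2*u)^2 := by
      rw [hc, hwu]
      linear_combination (-4*(η:ℂ)^2) * hu
    rw [hJ]
    rw [Matrix.add_mulVec, Matrix.add_mulVec, Matrix.smul_mulVec,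
      Matrix.smul_mulVec, Matrix.one_mulVec, ← Matrix.mulVec_mulVec, hμ,
      Matrix.mulVec_smul, hμ, hcμ]
    funext i
    simp [smul_smul]
    ring
  constructor
  · rw [spectrum.mem_iff]
    intro hunit
    have hdet : (algebraMap ℂ (Matrix (Fin 4) (Fin 4) ℂ) c - J).det = 0 := by
      rw [← Matrix.exists_mulVec_eq_zero_iff]
      refine ⟨v, hvne, ?_⟩
      rw [Matrix.sub_mulVec, Algebra.algebraMap_eq_smul_one, Matrix.smul_mulVec,
        Matrix.one_mulVec, hJv, sub_self]
    have := (Matrix.isUnit_iff_isUnit_det _).mp hunit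
    rw [hdet] at this
    exact (not_isUnit_zero this).elim
  · intro hη
    have ha : -4*η + 2*ω + 4*η*ω^2 > 0 := by
      nlinarith [mul_nonneg (by linarith : (0:ℝ) ≤ ω/2 - η) (by nlinarith : (0:ℝ) ≤ 1 - ω^2),
        pow_pos hω0 3]
    refine ⟨ha, ?_⟩
    have hwre : w.re = 0 := by
      have h1 : (w^2).im = 0 := by rw [hw2, Complex.ofReal_im]
      have h2 : (w^2).re < 0 := by
        rw [hw2, Complex.ofReal_re]; nlinarith
      rw [sq] at h1 h2
      simp [Complex.mul_re, Complex.mul_im] at h1 h2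
      rcases mul_eq_zero.mp (by linarith : w.re * w.im = 0) with h | h
      · exact h
      · rw [h] at h2; nlinarith
    have hc' : c = ((1 + η*(-4*η + 2*ω + 4*η*ω^2) : ℝ) : ℂ) + ((2*η : ℝ) : ℂ) * w := by
      rw [hc]; push_cast; ring
    have hcre : c.re = 1 + η * (-4*η + 2*ω + 4*η*ω^2) := by
      rw [hc']
      simp only [Complex.add_re, Complex.mul_re, Complex.ofReal_re, Complex.ofReal_im, hwre]
      ring
    have h1 : (1:ℝ) < c.re := by
      rw [hcre]; nlinarith
    calc (1:ℝ) < c.re := h1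
      _ ≤ |c.re| := le_abs_self _
      _ ≤ ‖c‖ := Complex.abs_re_le_norm c
end
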